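/- arXiv:1209.5575 — 6 statements merged into one kernel-verified Lean document; each statement's English description precedes it below -/
import Mathlib

section
/- Let A ⊆ ℤ with a_n = max_{x∈ℤ} |A ∩ [x+1, x+n]|, and suppose sup_n n·(a_n/n − α) = +∞ for some real α ∈ [0,1]. If B ⊆ ℤ has upper Banach density BD(B) ≥ 1 − α, then the difference set A − B is thick. -/
open Filter Set Pointwise

/-- `maxCount A n` = max over `x ∈ ℤ` of `|A ∩ [x+1, x+n]|`. -/
noncomputable def maxCount (A : Set ℤ) (n : ℕ) : ℕ :=
  sSup {c : ℕ | ∃ x : ℤ, c = (A ∩ Set.Icc (x + 1) (x + n)).ncard}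

/-- Upper Banach density of a set of integers. -/
noncomputable def BD (A : Set ℤ) : ℝ :=
  ⨅ n : ℕ+, (maxCount A (n : ℕ) : ℝ) / (n : ℕ)

def Thick (A : Set ℤ) : Prop :=
  ∀ k : ℕ, ∃ y : ℤ, Set.Icc (y + 1) (y + k) ⊆ A

def Syndetic (A : Set ℤ) : Prop :=
  ∃ k : ℕ, ∀ x : ℤ, (A ∩ Set.Icc (x + 1) (x + k)).Nonempty

/-!
A window of length `n` carrying more than `a_n - αn > k` points of `A` and a window of the same
length carrying at least `(1 - α)n` points of `B` have more than `n + k` points between them.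
Shifting the second window by any `m` in a fixed interval of length `k` keeps both inside one
interval of length `n + k`, so by pigeonhole the shifted copy of `B` meets `A`, i.e. `m ∈ A - B`.
-/

theorem Set.inter_nonempty_of_ncard_lt_ncard_add_ncard {α : Type*} {s t u : Set α}
    (hu : u.Finite) (hs : s ⊆ u) (ht : t ⊆ u) (h : u.ncard < s.ncard + t.ncard) :
    (s ∩ t).Nonempty := by
  by_contra hst
  have hdisj : Disjoint s t :=
    Set.disjoint_iff_inter_eq_empty.mpr (Set.not_nonempty_iff_eq_empty.mp hst)
  have := Set.ncard_le_ncard (Set.union_subset hs ht) hu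
  rw [Set.ncard_union_eq hdisj (hu.subset hs) (hu.subset ht)] at this
  omega

lemma Int.ncard_Icc_add_one_add (x : ℤ) (n : ℕ) : (Icc (x + 1) (x + n)).ncard = n := by
  rw [← Finset.coe_Icc, ncard_coe_finset, Int.card_Icc]
  omega

lemma exists_maxCount_eq (A : Set ℤ) (n : ℕ) :
    ∃ x : ℤ, maxCount A n = (A ∩ Icc (x + 1) (x + n)).ncard := by
  set counts := {c : ℕ | ∃ x : ℤ, c = (A ∩ Icc (x + 1) (x + n)).ncard}
  have hbdd : BddAbove counts := by
    refine ⟨n, ?_⟩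
    rintro c ⟨x, rfl⟩
    exact (ncard_le_ncard inter_subset_right (finite_Icc _ _)).trans
      (Int.ncard_Icc_add_one_add x n).le
  exact Nat.sSup_mem (s := counts) ⟨_, 0, rfl⟩ hbdd

lemma mul_le_maxCount_of_le_BD {B : Set ℤ} {c : ℝ} (h : c ≤ BD B) (n : ℕ+) :
    c * (n : ℕ) ≤ maxCount B n := by
  have hBD : BD B ≤ (maxCount B n : ℝ) / (n : ℕ) :=
    ciInf_le ⟨0, by rintro _ ⟨m, rfl⟩; positivity⟩ n
  exact (le_div_iff₀ (by exact_mod_cast n.pos)).mp (h.trans hBD)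

lemma Icc_subset_sub_of_ncard_add_lt {S T : Set ℤ} {x z : ℤ} {n k : ℕ}
    (hS : S ⊆ Icc (x + 1) (x + n)) (hT : T ⊆ Icc (z + 1) (z + n))
    (h : n + k < S.ncard + T.ncard) :
    Icc (x - z + 1) (x - z + k) ⊆ S - T := by
  intro m hm
  rw [mem_Icc] at hm
  have hshift : (· + m) '' T ⊆ Icc (x + 1) (x + (n + k : ℕ)) := by
    rintro _ ⟨b, hb, rfl⟩
    have := mem_Icc.mp (hT hb)
    rw [mem_Icc]
    push_cast
    omega
  have hS' : S ⊆ Icc (x + 1) (x + (n + k : ℕ)) := fun a ha => by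
    have := mem_Icc.mp (hS ha)
    rw [mem_Icc]
    push_cast
    omega
  obtain ⟨a, haS, b, hbT, rfl⟩ := inter_nonempty_of_ncard_lt_ncard_add_ncard (finite_Icc _ _) hS'
    hshift (by rwa [Int.ncard_Icc_add_one_add, ncard_image_of_injective _ (add_left_injective m)])
  exact ⟨b + m, haS, b, hbT, add_sub_cancel_left b m⟩

theorem diff_thick_of_unbounded_excess_general (A B : Set ℤ) (α : ℝ)
    (hA : ∀ M : ℝ, ∃ n : ℕ+, M < (n : ℝ) * ((maxCount A (n : ℕ) : ℝ) / (n : ℕ) - α))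
    (hB : BD B ≥ 1 - α) :
    Thick (A - B) := by
  intro k
  obtain ⟨n, hn⟩ := hA k
  have hn' : (n : ℝ) * ((maxCount A n : ℝ) / (n : ℕ) - α) = maxCount A n - α * (n : ℕ) := by
    field_simp
  have hBn := mul_le_maxCount_of_le_BD hB n
  obtain ⟨x, hx⟩ := exists_maxCount_eq A n
  obtain ⟨z, hz⟩ := exists_maxCount_eq B n
  have hcount : (n : ℕ) + k < maxCount A n + maxCount B n := by
    have : ((n : ℕ) : ℝ) + k < maxCount A n + maxCount B n := by linarith
    exact_mod_cast this
  rw [hx, hz] at hcount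
  exact ⟨x - z, (Icc_subset_sub_of_ncard_add_lt inter_subset_right inter_subset_right hcount).trans
    (sub_subset_sub inter_subset_left inter_subset_left)⟩

theorem diff_thick_of_unbounded_excess (A B : Set ℤ) (α : ℝ)
    (hα : α ∈ Set.Icc (0 : ℝ) 1)
    (hA : ∀ M : ℝ, ∃ n : ℕ+, M < (n : ℝ) * ((maxCount A (n : ℕ) : ℝ) / (n : ℕ) - α))
    (hB : BD B ≥ 1 - α) :
    Thick (A - B) :=
  diff_thick_of_unbounded_excess_general A B α hA hB
end

section
/- Let N, n ∈ ℕ, C ⊆ [1, N], and D ⊆ [1, n] be finite sets of integers. Then there exists z ∈ ℤ such that |(C − z) ∩ D|/n ≥ (|C|/N)·(|D|/n) − |D|/N. -/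
/-!
Count pairs `(c, d) ∈ C × D` by their difference `c - d`. All differences lie in the window
`[-n, N)` of `N + n` integers, and the number of pairs with difference `z` is `|(C - z) ∩ D|`, so
these counts sum to `|C| |D|` and one of them, say `k`, is at least `|C| |D| / (N + n)`. Since also
`k ≤ |D|`, this gives `N k ≥ |C| |D| - n k ≥ |C| |D| - n |D|`, which is the claim.
-/

open Filter Set Pointwise

namespace Finset

variable {G : Type*} [DecidableEq G]

lemma sum_addConvolution_of_add_subset [AddGroup G] {A B S : Finset G} (hS : A + B ⊆ S) :
    ∑ x ∈ S, A.addConvolution B x = #A * #B := by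
  rw [← card_product]
  exact (card_eq_sum_card_fiberwise fun ab hab ↦
    hS (add_mem_add (mem_product.1 hab).1 (mem_product.1 hab).2)).symm

lemma ncard_image_sub_const_inter [AddCommGroup G] (C D : Finset G) (z : G) :
    ((fun c ↦ c - z) '' (C : Set G) ∩ D).ncard = C.addConvolution (-D) z := by
  have : (fun c ↦ c - z) '' (C : Set G) ∩ D = ↑((-z +ᵥ C) ∩ D) := by
    simp [sub_eq_neg_add, ← Set.image_vadd]
  rw [this, Set.ncard_coe_finset, card_vadd_inter, neg_neg]

lemma exists_sum_le_card_nsmul {ι M : Type*} [Nonempty ι] [AddCommMonoid M] [LinearOrder M]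
    [AddLeftMono M] (s : Finset ι) (f : ι → M) : ∃ i, ∑ j ∈ s, f j ≤ #s • f i := by
  obtain rfl | hs := s.eq_empty_or_nonempty
  · simp
  obtain ⟨i, -, hi⟩ := s.exists_max_image f hs
  exact ⟨i, sum_le_card_nsmul s f (f i) hi⟩

end Finset

lemma div_mul_div_sub_div_le_div {c d k M m : ℝ} (hk : 0 ≤ k) (hkd : k ≤ d) (hM : 0 ≤ M)
    (hm : 0 ≤ m) (h : c * d ≤ (M + m) * k) : c / M * (d / m) - d / M ≤ k / m := by
  obtain rfl | hM := hM.eq_or_lt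
  · simpa using div_nonneg hk hm
  obtain rfl | hm := hm.eq_or_lt
  · simpa using div_nonneg (hk.trans hkd) hM.le
  have key : c * d - m * d ≤ M * k := by nlinarith [mul_le_mul_of_nonneg_left hkd hm.le]
  calc c / M * (d / m) - d / M = (c * d - m * d) / (M * m) := by field_simp
    _ ≤ M * k / (M * m) := by gcongr
    _ = k / m := mul_div_mul_left k m hM.ne'

theorem shifting_lemma_general (N n : ℕ)
    (C D : Set ℤ) (hC : C ⊆ Set.Icc 1 (N : ℤ)) (hD : D ⊆ Set.Icc 1 (n : ℤ)) :
    ∃ z : ℤ, (((fun c => c - z) '' C ∩ D).ncard : ℝ) / n ≥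
      ((C.ncard : ℝ) / N) * ((D.ncard : ℝ) / n) - (D.ncard : ℝ) / N := by
  obtain ⟨C, rfl⟩ := ((Set.finite_Icc _ _).subset hC).exists_finset_coe
  obtain ⟨D, rfl⟩ := ((Set.finite_Icc _ _).subset hD).exists_finset_coe
  have hS : C + -D ⊆ Finset.Ico (-(n : ℤ)) N := by
    refine Finset.add_subset_iff.2 fun c hc d hd ↦ ?_
    have hc := hC hc
    have hd := hD (Finset.mem_neg'.1 hd)
    rw [Set.mem_Icc] at hc hd
    rw [Finset.mem_Ico]
    omega
  obtain ⟨z, hz⟩ :=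
    Finset.exists_sum_le_card_nsmul (Finset.Ico (-(n : ℤ)) N) (C.addConvolution (-D))
  rw [Finset.sum_addConvolution_of_add_subset hS, Finset.card_neg, Int.card_Ico,
    show (N - -(n : ℤ)).toNat = N + n by omega, smul_eq_mul] at hz
  refine ⟨z, ?_⟩
  rw [Finset.ncard_image_sub_const_inter, Set.ncard_coe_finset, Set.ncard_coe_finset, ge_iff_le]
  have hk : C.addConvolution (-D) z ≤ D.card :=
    Finset.addConvolution_le_card_right.trans (Finset.card_neg D).le
  exact div_mul_div_sub_div_le_div (by positivity) (by exact_mod_cast hk) (by positivity)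
    (by positivity) (by exact_mod_cast hz)

theorem shifting_lemma (N n : ℕ) (hN : 0 < N) (hn : 0 < n)
    (C D : Set ℤ) (hC : C ⊆ Set.Icc 1 (N : ℤ)) (hD : D ⊆ Set.Icc 1 (n : ℤ)) :
    ∃ z : ℤ, (((fun c => c - z) '' C ∩ D).ncard : ℝ) / n ≥
      ((C.ncard : ℝ) / N) * ((D.ncard : ℝ) / n) - (D.ncard : ℝ) / N :=
  shifting_lemma_general N n C D hC hD
end

section
/- Let A, B ⊆ ℤ. For each n ∈ ℕ choose x_n, y_n achieving A_n = A ∩ [x_n+1, x_n+n²] and B_n = B ∩ [y_n+1, y_n+n] with lim |A_n|/n² = α and lim |B_n|/n = β. Then there exists a sequence (z_n) such that, setting E_n = (A_n − x_n − z_n) ∩ (B_n − y_n) ⊆ [1, n], one has liminf_{n→∞} |E_n|/n ≥ αβ. -/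
/-!
For `C ⊆ [1, N]` and `D ⊆ [1, n]`, every `d ∈ D` satisfies `d + z ∈ C` for at least `|C| - n`
shifts `z ∈ [0, N)`, so averaging over these `N` shifts gives some `z` with
`N |(C - z) ∩ D| ≥ |C| |D| - n |D|`. With `C = A_n - x_n`, `D = B_n - y_n` and `N = n²` this reads
`|E_n| / n ≥ (|A_n| / n²) (|B_n| / n) - (|B_n| / n) / n`, and the right-hand side tends to `αβ`.
-/

open Filter Set Pointwise

namespace Finset

lemma card_le_card_filter_add_mem_add {N n : ℕ} {C : Finset ℤ} (hC : C ⊆ Icc 1 (N : ℤ)) {d : ℤ}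
    (hd : d ∈ Icc 1 (n : ℤ)) : #C ≤ #{z ∈ Ico 0 (N : ℤ) | d + z ∈ C} + n := by
  rw [mem_Icc] at hd
  have hlarge : #{c ∈ C | d ≤ c} ≤ #{z ∈ Ico 0 (N : ℤ) | d + z ∈ C} := by
    refine card_le_card_of_injOn (· - d) (fun c hc => ?_) (fun _ _ _ _ h => sub_left_injective h)
    simp only [coe_filter, Set.mem_ofPred_eq, mem_Ico, add_sub_cancel] at hc ⊢
    have := mem_Icc.mp (hC hc.1)
    exact ⟨⟨by omega, by omega⟩, hc.1⟩
  have hsmall : #{c ∈ C | ¬ d ≤ c} ≤ n := by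
    calc #{c ∈ C | ¬ d ≤ c} ≤ #(Icc 1 (n : ℤ)) := card_le_card fun c hc => by
          simp only [mem_filter, mem_Icc] at hc ⊢
          have := mem_Icc.mp (hC hc.1)
          omega
      _ = n := by simp
  have := card_filter_add_card_filter_not (s := C) (p := (d ≤ ·))
  omega

theorem exists_card_mul_card_le_card_filter_add_mem {N n : ℕ} {C D : Finset ℤ}
    (hC : C ⊆ Icc 1 (N : ℤ)) (hD : D ⊆ Icc 1 (n : ℤ)) :
    ∃ z : ℤ, #C * #D ≤ N * #{d ∈ D | d + z ∈ C} + n * #D := by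
  rcases N.eq_zero_or_pos with rfl | hN
  · exact ⟨0, by simp [subset_empty.mp (by simpa using hC)]⟩
  have hsum : #C * #D ≤ ∑ z ∈ Ico 0 (N : ℤ), #{d ∈ D | d + z ∈ C} + n * #D :=
    calc #C * #D = ∑ d ∈ D, #C := by simp [mul_comm]
      _ ≤ ∑ d ∈ D, (#{z ∈ Ico 0 (N : ℤ) | d + z ∈ C} + n) :=
          sum_le_sum fun d hd => card_le_card_filter_add_mem_add hC (hD hd)
      _ = ∑ z ∈ Ico 0 (N : ℤ), #{d ∈ D | d + z ∈ C} + n * #D := by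
          rw [sum_add_distrib, sum_const, smul_eq_mul, mul_comm #D]
          congr 1
          exact (sum_card_bipartiteAbove_eq_sum_card_bipartiteBelow (fun z d => d + z ∈ C)).symm
  obtain ⟨z, -, hz⟩ := exists_le_of_sum_le (s := Ico 0 (N : ℤ))
    (f := fun _ => ∑ w ∈ Ico 0 (N : ℤ), #{d ∈ D | d + w ∈ C})
    (g := fun z => N * #{d ∈ D | d + z ∈ C}) ⟨0, by simpa using hN⟩ (by simp [← mul_sum])
  exact ⟨z, hsum.trans (by gcongr)⟩

end Finset

theorem Set.exists_ncard_mul_ncard_le_ncard_image_sub_inter {N n : ℕ} {C D : Set ℤ}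
    (hC : C ⊆ Icc 1 (N : ℤ)) (hD : D ⊆ Icc 1 (n : ℤ)) :
    ∃ z : ℤ, C.ncard * D.ncard ≤ N * ((· - z) '' C ∩ D).ncard + n * D.ncard := by
  obtain ⟨C, rfl⟩ := ((finite_Icc _ _).subset hC).exists_finset_coe
  obtain ⟨D, rfl⟩ := ((finite_Icc _ _).subset hD).exists_finset_coe
  rw [← Finset.coe_Icc, Finset.coe_subset] at hC hD
  obtain ⟨z, hz⟩ := Finset.exists_card_mul_card_le_card_filter_add_mem hC hD
  have : (· - z) '' (C : Set ℤ) ∩ D = ↑{d ∈ D | d + z ∈ C} := by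
    ext d; simp [sub_eq_iff_eq_add, and_comm]
  refine ⟨z, ?_⟩
  simpa only [this, ncard_coe_finset] using hz

lemma Set.image_sub_inter_Icc_subset (S : Set ℤ) (t m : ℤ) :
    (· - t) '' (S ∩ Icc (t + 1) (t + m)) ⊆ Icc 1 m := by
  rintro _ ⟨a, ⟨-, ha⟩, rfl⟩
  exact ⟨by linarith [ha.1], by linarith [ha.2]⟩

theorem dense_intersection_of_shifts (A B : Set ℤ) (x y : ℕ → ℤ) (α β : ℝ)
    (hA : Filter.Tendsto
      (fun n : ℕ => ((A ∩ Set.Icc (x n + 1) (x n + (n : ℤ) ^ 2)).ncard : ℝ) / (n : ℝ) ^ 2)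
      Filter.atTop (nhds α))
    (hB : Filter.Tendsto
      (fun n : ℕ => ((B ∩ Set.Icc (y n + 1) (y n + (n : ℤ))).ncard : ℝ) / n)
      Filter.atTop (nhds β)) :
    ∃ z : ℕ → ℤ,
      α * β ≤ Filter.liminf
        (fun n : ℕ =>
          ((((fun a => a - x n - z n) '' (A ∩ Set.Icc (x n + 1) (x n + (n : ℤ) ^ 2))) ∩
            ((fun b => b - y n) '' (B ∩ Set.Icc (y n + 1) (y n + (n : ℤ))))).ncard : ℝ) / n)
        Filter.atTop := by
  set An := fun n : ℕ => A ∩ Icc (x n + 1) (x n + (n : ℤ) ^ 2)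
  set Bn := fun n : ℕ => B ∩ Icc (y n + 1) (y n + (n : ℤ))
  have hC (n : ℕ) : (· - x n) '' An n ⊆ Icc 1 ((n ^ 2 : ℕ) : ℤ) := by
    push_cast; exact image_sub_inter_Icc_subset _ _ _
  choose z hz using fun n =>
    exists_ncard_mul_ncard_le_ncard_image_sub_inter (hC n) (image_sub_inter_Icc_subset B (y n) n)
  refine ⟨z, ?_⟩
  set E := fun n : ℕ => ((fun a => a - x n - z n) '' An n) ∩ ((· - y n) '' Bn n)
  simp only [image_image, ncard_image_of_injective _ sub_left_injective] at hz
  have hlow : ∀ n > 0, (An n).ncard / (n : ℝ) ^ 2 * ((Bn n).ncard / n) - (Bn n).ncard / n / n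
      ≤ (E n).ncard / n := by
    intro n hn
    have hshift : ((An n).ncard * (Bn n).ncard : ℝ) ≤ n ^ 2 * (E n).ncard + n * (Bn n).ncard := by
      exact_mod_cast hz n
    field_simp
    linarith
  have hEB (n : ℕ) : (E n).ncard ≤ (Bn n).ncard := by
    rw [← ncard_image_of_injective (Bn n) (sub_left_injective (b := y n))]
    exact ncard_le_ncard inter_subset_right (((finite_Icc _ _).inter_of_right B).image _)
  have hup (n : ℕ) : ((E n).ncard : ℝ) / n ≤ (Bn n).ncard / n :=
    div_le_div_of_nonneg_right (mod_cast hEB n) n.cast_nonneg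
  have hlim := (hA.mul hB).sub (hB.div_atTop tendsto_natCast_atTop_atTop)
  rw [sub_zero] at hlim
  rw [← hlim.liminf_eq]
  exact liminf_le_liminf ((eventually_gt_atTop 0).mono hlow) hlim.isBoundedUnder_ge
    (hB.isBoundedUnder_le.mono_le (.of_forall hup)).isCoboundedUnder_ge
end

section
/- For each n ∈ ℕ let E_n ⊆ [1, n] be a set of integers, and suppose lim_{n→∞} |E_n|/n = γ > 0. Then there exists a finite set F ⊆ ℤ with |F| ≤ 1/γ such that for every m ∈ ℕ, the set {n ∈ ℕ : [1, m] ⊆ (E_n − E_n) + F} has positive upper Banach density. -/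
open Filter Set Pointwise

/-- max count for sets of naturals. -/
noncomputable def maxCountN (S : Set ℕ) (n : ℕ) : ℕ :=
  sSup {c : ℕ | ∃ x : ℕ, c = (S ∩ Set.Icc (x + 1) (x + n)).ncard}

/-- Upper Banach density for sets of naturals. -/
noncomputable def BDN (S : Set ℕ) : ℝ :=
  ⨅ n : ℕ+, (maxCountN S (n : ℕ) : ℝ) / (n : ℕ)

/-!
Call `n` a packing index for a finite `F ⊆ ℤ` when the translates `f + E n`, `f ∈ F`, are pairwise
disjoint. They all lie in an interval of length `n + O(1)`, so `|F| · |E n| ≤ n + O(1)` for such `n`;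
if the packing indices have positive upper Banach density they are infinite, whence `|F| γ ≤ 1`.
Take such an `F` of maximal size. For `x ∈ [1, m] \ F` the packing indices of `F ∪ {x}` have density
zero, and since the upper Banach density is a limit (Fekete) it is subadditive, so removing them
from the packing indices of `F` leaves a set of positive density. For `n` in it every such `x` has
`x - f ∈ ±(E n - E n)` for some `f ∈ F`, i.e. `x ∈ (E n - E n) + F`; and `F ⊆ (E n - E n) + F`
as soon as `E n ≠ ∅`.
-/

lemma Finset.exists_card_maximal {α : Type*} (p : Finset α → Prop) {N : ℕ} (hp : ∃ F, p F)
    (hN : ∀ F, p F → F.card ≤ N) : ∃ F, p F ∧ ∀ G, p G → G.card ≤ F.card := by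
  classical
  obtain ⟨F₀, hF₀⟩ := hp
  obtain ⟨F, hF, hk⟩ := Nat.findGreatest_spec (P := fun k => ∃ F, p F ∧ F.card = k)
    (hN F₀ hF₀) ⟨F₀, hF₀, rfl⟩
  exact ⟨F, hF, fun G hG => hk ▸ Nat.le_findGreatest (hN G hG) ⟨G, hG, rfl⟩⟩

section maxCountN

lemma ncard_inter_Icc_le (S : Set ℕ) (x n : ℕ) : (S ∩ Icc (x + 1) (x + n)).ncard ≤ n :=
  calc (S ∩ Icc (x + 1) (x + n)).ncard ≤ (Icc (x + 1) (x + n)).ncard :=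
        ncard_le_ncard inter_subset_right (finite_Icc _ _)
    _ = n := by simp

lemma le_maxCountN (S : Set ℕ) (n x : ℕ) :
    (S ∩ Icc (x + 1) (x + n)).ncard ≤ maxCountN S n :=
  le_csSup ⟨n, by rintro c ⟨x, rfl⟩; exact ncard_inter_Icc_le S x n⟩ ⟨x, rfl⟩

lemma maxCountN_le_of_forall {S : Set ℕ} {n c : ℕ}
    (h : ∀ x, (S ∩ Icc (x + 1) (x + n)).ncard ≤ c) : maxCountN S n ≤ c :=
  csSup_le ⟨_, 0, rfl⟩ (by rintro _ ⟨x, rfl⟩; exact h x)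

lemma maxCountN_mono {S T : Set ℕ} (h : S ⊆ T) (n : ℕ) : maxCountN S n ≤ maxCountN T n :=
  maxCountN_le_of_forall fun x =>
    (ncard_le_ncard (inter_subset_inter_left _ h) ((finite_Icc _ _).inter_of_right T)).trans
      (le_maxCountN T n x)

lemma maxCountN_union_le (A B : Set ℕ) (n : ℕ) :
    maxCountN (A ∪ B) n ≤ maxCountN A n + maxCountN B n :=
  maxCountN_le_of_forall fun x => by
    rw [union_inter_distrib_right]
    exact (ncard_union_le _ _).trans (add_le_add (le_maxCountN A n x) (le_maxCountN B n x))

lemma maxCountN_add_le (S : Set ℕ) (a b : ℕ) :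
    maxCountN S (a + b) ≤ maxCountN S a + maxCountN S b :=
  maxCountN_le_of_forall fun x => by
    have hsplit : Icc (x + 1) (x + (a + b)) = Icc (x + 1) (x + a) ∪ Icc (x + a + 1) (x + a + b) := by
      ext y
      simp only [mem_union, mem_Icc]
      omega
    rw [hsplit, inter_union_distrib_left]
    exact (ncard_union_le _ _).trans (add_le_add (le_maxCountN S a x) (le_maxCountN S b (x + a)))

lemma maxCountN_le_ncard {S : Set ℕ} (hS : S.Finite) (n : ℕ) : maxCountN S n ≤ S.ncard :=
  maxCountN_le_of_forall fun _ => ncard_le_ncard inter_subset_left hS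

lemma maxCountN_univ (n : ℕ) : maxCountN univ n = n :=
  (maxCountN_le_of_forall (ncard_inter_Icc_le univ · n)).antisymm (by simpa using le_maxCountN univ n 0)

end maxCountN

section BDN

lemma BDN_le (S : Set ℕ) (n : ℕ+) : BDN S ≤ maxCountN S n / (n : ℕ) :=
  ciInf_le ⟨0, by rintro _ ⟨k, rfl⟩; positivity⟩ n

lemma BDN_nonneg (S : Set ℕ) : 0 ≤ BDN S :=
  le_ciInf fun _ => by positivity

lemma tendsto_maxCountN_div_BDN (S : Set ℕ) :
    Tendsto (fun n : ℕ => (maxCountN S n : ℝ) / n) atTop (nhds (BDN S)) := by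
  have hsub : Subadditive fun n => (maxCountN S n : ℝ) := fun a b => by
    dsimp only
    exact_mod_cast maxCountN_add_le S a b
  refine tendsto_order.2 ⟨fun a ha => ?_, fun b hb => ?_⟩
  · filter_upwards [eventually_gt_atTop 0] with n hn
    exact ha.trans_le (BDN_le S ⟨n, hn⟩)
  · obtain ⟨n, hn⟩ := exists_lt_of_ciInf_lt hb
    exact hsub.eventually_div_lt_of_div_lt n.ne_zero hn

lemma BDN_mono {S T : Set ℕ} (h : S ⊆ T) : BDN S ≤ BDN T :=
  le_of_tendsto_of_tendsto' (tendsto_maxCountN_div_BDN S) (tendsto_maxCountN_div_BDN T) fun n => by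
    gcongr
    exact_mod_cast maxCountN_mono h n

lemma BDN_union_le (A B : Set ℕ) : BDN (A ∪ B) ≤ BDN A + BDN B :=
  le_of_tendsto_of_tendsto' (tendsto_maxCountN_div_BDN _)
    ((tendsto_maxCountN_div_BDN A).add (tendsto_maxCountN_div_BDN B)) fun n => by
    rw [← add_div]
    gcongr
    exact_mod_cast maxCountN_union_le A B n

lemma BDN_le_BDN_diff_add (S T : Set ℕ) : BDN S ≤ BDN (S \ T) + BDN T :=
  (BDN_mono (by rw [sdiff_union_self]; exact subset_union_left)).trans (BDN_union_le _ _)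

lemma BDN_eq_zero_of_finite {S : Set ℕ} (hS : S.Finite) : BDN S = 0 :=
  tendsto_nhds_unique (tendsto_maxCountN_div_BDN S) <|
    squeeze_zero (g := fun n : ℕ => (S.ncard : ℝ) / n) (fun _ => by positivity)
      (fun n => by gcongr; exact_mod_cast maxCountN_le_ncard hS n)
      (tendsto_const_div_atTop_nhds_zero_nat _)

lemma BDN_biUnion_le {ι : Type*} (s : Finset ι) (T : ι → Set ℕ) :
    BDN (⋃ i ∈ s, T i) ≤ ∑ i ∈ s, BDN (T i) := by
  classical
  induction s using Finset.induction_on with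
  | empty => simp [BDN_eq_zero_of_finite finite_empty]
  | insert i s hi ih =>
    rw [Finset.set_biUnion_insert, Finset.sum_insert hi]
    exact (BDN_union_le _ _).trans (add_le_add le_rfl ih)

lemma BDN_univ : BDN univ = 1 :=
  tendsto_nhds_unique (tendsto_maxCountN_div_BDN univ) <| tendsto_const_nhds.congr' <| by
    filter_upwards [eventually_gt_atTop 0] with n hn
    rw [maxCountN_univ, div_self (by positivity)]

end BDN

section packing

def packing (E : ℕ → Set ℤ) (F : Finset ℤ) : Set ℕ :=
  {n | ∀ f ∈ F, ∀ g ∈ F, f ≠ g → f - g ∉ E n - E n}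

lemma packing_empty (E : ℕ → Set ℤ) : packing E ∅ = univ := by
  simp [packing]

lemma card_mul_card_le {A F : Finset ℤ} {n D : ℕ} (hA : A ⊆ Finset.Icc 1 (n : ℤ))
    (hF : F ⊆ Finset.Icc (-D : ℤ) D)
    (hdisj : ∀ f ∈ F, ∀ g ∈ F, f ≠ g → f - g ∉ (A : Set ℤ) - A) :
    F.card * A.card ≤ n + 2 * D := by
  have hinj : (F ×ˢ A : Set (ℤ × ℤ)).InjOn fun p => p.1 + p.2 := by
    rintro ⟨f, a⟩ ⟨hf, ha⟩ ⟨g, b⟩ ⟨hg, hb⟩ (hfa : f + a = g + b)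
    by_cases hfg : f = g
    · simp only [Prod.mk.injEq]
      omega
    · exact absurd (Set.mem_sub.2 ⟨b, hb, a, ha, by omega⟩) (hdisj f hf g hg hfg)
  have hsub : F + A ⊆ Finset.Icc (1 - D : ℤ) (n + D) := by
    intro z hz
    obtain ⟨f, hf, a, ha, rfl⟩ := Finset.mem_add.1 hz
    have := Finset.mem_Icc.1 (hF hf)
    have := Finset.mem_Icc.1 (hA ha)
    exact Finset.mem_Icc.2 ⟨by omega, by omega⟩
  rw [← Finset.card_add_iff.2 hinj]
  calc (F + A).card ≤ (Finset.Icc (1 - D : ℤ) (n + D)).card := Finset.card_le_card hsub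
    _ = n + 2 * D := by rw [Int.card_Icc]; omega

variable {E : ℕ → Set ℤ} {F : Finset ℤ}

lemma card_mul_le_one_of_BDN_packing_pos (hE : ∀ n : ℕ, E n ⊆ Icc 1 (n : ℤ)) {γ : ℝ}
    (hlim : Tendsto (fun n : ℕ => ((E n).ncard : ℝ) / n) atTop (nhds γ))
    (hpos : 0 < BDN (packing E F)) : (F.card : ℝ) * γ ≤ 1 := by
  set D := F.sup Int.natAbs
  have hFD : F ⊆ Finset.Icc (-D : ℤ) D := fun f hf => by
    have : f.natAbs ≤ D := Finset.le_sup hf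
    exact Finset.mem_Icc.2 ⟨by omega, by omega⟩
  have hbound : ∀ n ∈ packing E F, (F.card : ℝ) * ((E n).ncard / n) ≤ 1 + 2 * D / n := by
    intro n hn
    have hfin : (E n).Finite := (finite_Icc _ _).subset (hE n)
    have hcard := card_mul_card_le (A := hfin.toFinset) (n := n)
      (by simpa [← Finset.coe_subset] using hE n) hFD (by rw [Set.Finite.coe_toFinset]; exact hn)
    rw [← ncard_eq_toFinset_card _ hfin] at hcard
    rcases n.eq_zero_or_pos with rfl | hn0
    · simp
    rw [mul_div_assoc', div_le_iff₀ (by positivity), add_mul, one_mul, div_mul_cancel₀ _ (by positivity)]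
    exact_mod_cast hcard
  have hinf : (packing E F).Infinite := fun hfin => hpos.ne' (BDN_eq_zero_of_finite hfin)
  have : NeBot (atTop ⊓ 𝓟 (packing E F)) := frequently_iff_neBot.1 (Nat.frequently_atTop_iff_infinite.2 hinf)
  have hrhs : Tendsto (fun n : ℕ => 1 + 2 * (D : ℝ) / n) atTop (nhds 1) := by
    simpa using tendsto_const_nhds.add (tendsto_const_div_atTop_nhds_zero_nat (2 * (D : ℝ)))
  exact le_of_tendsto_of_tendsto ((hlim.const_mul _).mono_left inf_le_left)
    (hrhs.mono_left inf_le_left) (mem_inf_of_right (mem_principal.2 hbound))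

lemma mem_sub_add_of_notMem_packing_insert {n : ℕ} {x : ℤ} (hn : n ∈ packing E F)
    (hx : n ∉ packing E (insert x F)) : x ∈ E n - E n + (F : Set ℤ) := by
  simp only [packing, mem_ofPred_eq, not_forall, not_not] at hx
  obtain ⟨f, hf, g, hg, hfg, hmem⟩ := hx
  rcases Finset.mem_insert.1 hf with rfl | hfF <;> rcases Finset.mem_insert.1 hg with rfl | hgF
  · exact absurd rfl hfg
  · exact Set.mem_add.2 ⟨f - g, hmem, g, hgF, sub_add_cancel f g⟩
  · -- `E n - E n` is symmetric
    obtain ⟨a, ha, b, hb, hab⟩ := Set.mem_sub.1 hmem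
    exact Set.mem_add.2 ⟨b - a, Set.mem_sub.2 ⟨b, hb, a, ha, rfl⟩, f, hfF, by omega⟩
  · exact absurd hmem (hn f hfF g hgF hfg)

end packing

theorem lemma_two (E : ℕ → Set ℤ) (hE : ∀ n : ℕ, E n ⊆ Set.Icc 1 (n : ℤ)) (γ : ℝ)
    (hγ : 0 < γ)
    (hlim : Filter.Tendsto (fun n : ℕ => ((E n).ncard : ℝ) / n) Filter.atTop (nhds γ)) :
    ∃ F : Finset ℤ, (F.card : ℝ) ≤ 1 / γ ∧
      ∀ m : ℕ, 0 < BDN {n : ℕ | Set.Icc 1 (m : ℤ) ⊆ (E n - E n) + (F : Set ℤ)} := by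
  classical
  have hcard : ∀ F, 0 < BDN (packing E F) → (F.card : ℝ) ≤ 1 / γ := fun F hF =>
    (le_div_iff₀ hγ).2 (card_mul_le_one_of_BDN_packing_pos hE hlim hF)
  obtain ⟨F, hFpos, hFmax⟩ := Finset.exists_card_maximal (fun F => 0 < BDN (packing E F))
    ⟨∅, by simp [packing_empty, BDN_univ]⟩ fun F hF => Nat.le_floor (hcard F hF)
  refine ⟨F, hcard F hFpos, fun m => ?_⟩
  have hnull : ∀ x ∉ F, BDN (packing E (insert x F)) = 0 := fun x hx =>
    (BDN_nonneg _).antisymm' <| not_lt.1 fun h => by simpa [hx] using hFmax _ h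
  have hempty : {n | E n = ∅}.Finite := by
    refine (Nat.cofinite_eq_atTop ▸ hlim.eventually (lt_mem_nhds hγ)).subset fun n hn => ?_
    simp_all
  set bad := {n | E n = ∅} ∪ ⋃ x ∈ Finset.Icc 1 (m : ℤ) \ F, packing E (insert x F)
  have hbad : BDN bad = 0 := by
    refine le_antisymm ?_ (BDN_nonneg _)
    calc BDN bad ≤ 0 + ∑ x ∈ Finset.Icc 1 (m : ℤ) \ F, 0 := by
          refine (BDN_union_le _ _).trans (add_le_add (BDN_eq_zero_of_finite hempty).le ?_)
          refine (BDN_biUnion_le _ _).trans (Finset.sum_le_sum fun x hx => (hnull x ?_).le)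
          exact (Finset.mem_sdiff.1 hx).2
      _ = 0 := by simp
  have hcover : packing E F \ bad ⊆ {n | Icc 1 (m : ℤ) ⊆ E n - E n + (F : Set ℤ)} := by
    rintro n ⟨hn, hnbad⟩ z hz
    simp only [bad, mem_union, mem_ofPred_eq, mem_iUnion, not_or, not_exists] at hnbad
    by_cases hzF : z ∈ F
    · obtain ⟨a, ha⟩ := nonempty_iff_ne_empty.2 hnbad.1
      exact Set.mem_add.2 ⟨a - a, Set.mem_sub.2 ⟨a, ha, a, ha, rfl⟩, z, hzF, by simp⟩
    · exact mem_sub_add_of_notMem_packing_insert hn <|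
        hnbad.2 z (Finset.mem_sdiff.2 ⟨Finset.mem_Icc.2 (mem_Icc.1 hz), hzF⟩)
  calc 0 < BDN (packing E F) := hFpos
    _ ≤ BDN (packing E F \ bad) + BDN bad := BDN_le_BDN_diff_add _ _
    _ = BDN (packing E F \ bad) := by rw [hbad, add_zero]
    _ ≤ _ := BDN_mono hcover
end

section
/- Let A, B ⊆ ℤ with upper Banach densities BD(A) = α > 0 and BD(B) = β > 0. Then there exists a finite set F ⊆ ℤ with |F| ≤ 1/(αβ) such that (A − B) + F is thick. -/
/-!
For every `m`, averaging a window of `A` of length `m` against the translates of a window of `B`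
of length `m + n`, `n ≫ m`, gives a translate `u` such that `A ∩ (u + B)` has density almost
`αβ` in some window of length `m`. Cutting each such window to a tail all of whose initial
segments are dense and taking an ultrafilter limit of the translated sets yields, for any
`κ < αβ`, a set `D` with `|D ∩ [1, m]| ≥ κ m` for all `m`, each finite part of which embeds by
translations into `A` and into `B`; so every finite part of `D - D` lies in a translate of
`A - B`. A maximal family `F` of pairwise disjoint translates `f + D` has at most `1 / κ`
members and satisfies `D - D + F = ℤ`, hence `(A - B) + F` contains translates of all
intervals.
-/

open Filter Set Pointwise

noncomputable def windowCount (E : Set ℤ) (a : ℤ) (m : ℕ) : ℕ :=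
  (E ∩ Icc (a + 1) (a + m)).ncard

section windowCount

variable (E : Set ℤ) (a : ℤ)

lemma windowCount_eq_card_filter [DecidablePred (· ∈ E)] (m : ℕ) :
    windowCount E a m = ((Finset.Icc (a + 1) (a + m)).filter (· ∈ E)).card := by
  rw [windowCount, ← Set.ncard_coe_finset, Finset.coe_filter, ← Finset.coe_Icc]
  congr 1
  ext z
  simp only [mem_inter_iff, Finset.mem_coe, Finset.mem_Icc]
  exact ⟨fun ⟨hz, hI⟩ => ⟨hI, hz⟩, fun ⟨hI, hz⟩ => ⟨hz, hI⟩⟩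

lemma windowCount_le (m : ℕ) : windowCount E a m ≤ m := by
  classical
  rw [windowCount_eq_card_filter]
  refine (Finset.card_filter_le _ _).trans ?_
  simp

lemma windowCount_add (m l : ℕ) :
    windowCount E a (m + l) = windowCount E a m + windowCount E (a + m) l := by
  classical
  simp only [windowCount_eq_card_filter]
  have hIcc : Finset.Icc (a + 1) (a + (m + l : ℕ)) =
      Finset.Icc (a + 1) (a + m) ∪ Finset.Icc (a + m + 1) (a + m + l) := by
    ext z
    simp only [Finset.mem_union, Finset.mem_Icc]
    omega
  rw [← Finset.card_union_of_disjoint, ← Finset.filter_union, hIcc]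
  refine Finset.disjoint_filter_filter (Finset.disjoint_left.2 fun z hz hz' => ?_)
  simp only [Finset.mem_Icc] at hz hz'
  omega

lemma windowCount_vadd (x : ℤ) (m : ℕ) : windowCount (x +ᵥ E) a m = windowCount E (a - x) m := by
  have hIcc : Icc (a + 1) (a + m) = x +ᵥ Icc (a - x + 1) (a - x + m) := by
    rw [vadd_Icc]; congr 1 <;> ring
  rw [windowCount, windowCount, hIcc, ← Set.vadd_set_inter, Set.ncard_vadd_set]

lemma windowCount_le_add_natAbs (b : ℤ) (m : ℕ) :
    windowCount E a m ≤ windowCount E b m + (a - b).natAbs := by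
  rcases le_total b a with hba | hab
  · obtain ⟨k, rfl⟩ : ∃ k : ℕ, a = b + k := ⟨(a - b).toNat, by omega⟩
    have := windowCount_add E b k m
    rw [add_comm k, windowCount_add, add_comm] at this
    have := windowCount_le E (b + m) k
    simp only [add_sub_cancel_left, Int.natAbs_natCast]
    omega
  · obtain ⟨k, rfl⟩ : ∃ k : ℕ, b = a + k := ⟨(b - a).toNat, by omega⟩
    have := windowCount_add E a m k
    rw [add_comm m, windowCount_add] at this
    have := windowCount_le E a k
    omega

lemma windowCount_le_windowCount_add (y n k : ℕ) :
    windowCount E a (y + n + k) ≤ windowCount E (a + y) n + (y + k) := by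
  have := windowCount_le E a y
  have := windowCount_le E (a + y + n) k
  rw [windowCount_add, windowCount_add, Nat.cast_add, ← add_assoc]
  omega

lemma windowCount_congr {E' : Set ℤ} {m : ℕ} (h : ∀ z ∈ Icc (a + 1) (a + m), z ∈ E ↔ z ∈ E') :
    windowCount E a m = windowCount E' a m := by
  rw [windowCount, windowCount, inter_comm, inter_comm E']
  congr 1
  ext z
  exact and_congr_right (h z)

variable {E a}

lemma nonempty_of_windowCount_ne_zero {m : ℕ} (h : windowCount E a m ≠ 0) : E.Nonempty :=
  (Set.nonempty_of_ncard_ne_zero h).mono inter_subset_left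

end windowCount

lemma exists_windowCount_ge_BD_mul (E : Set ℤ) (m : ℕ) :
    ∃ p : ℤ, BD E * m ≤ windowCount E p m := by
  rcases Nat.eq_zero_or_pos m with rfl | hm
  · exact ⟨0, by simp⟩
  have hmax : maxCount E m ∈ {c : ℕ | ∃ x : ℤ, c = windowCount E x m} :=
    Nat.sSup_mem ⟨_, 0, rfl⟩ ⟨m, by rintro _ ⟨x, rfl⟩; exact windowCount_le E x m⟩
  obtain ⟨p, hp⟩ := hmax
  refine ⟨p, ?_⟩
  have hBD : BD E ≤ maxCount E m / m :=
    ciInf_le ⟨0, by rintro _ ⟨k, rfl⟩; positivity⟩ (⟨m, hm⟩ : ℕ+)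
  rwa [le_div_iff₀ (by positivity), hp] at hBD

/-- Cutting a window at the point where `windowCount E p j - γ j` is minimal leaves a tail all of
whose initial segments have density at least `γ`. -/
lemma exists_prefixes_dense_of_window {E : Set ℤ} {γ δ : ℝ} (hγ : 0 ≤ γ) {p : ℤ} {n : ℕ}
    (h : δ * n ≤ windowCount E p n) :
    ∃ (r : ℤ) (M : ℕ), (δ - γ) * n ≤ M ∧ ∀ m ≤ M, γ * m ≤ windowCount E r m := by
  obtain ⟨j, hjn, hmin⟩ := (Finset.range (n + 1)).exists_min_image
    (fun j => (windowCount E p j : ℝ) - γ * j) ⟨0, by simp⟩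
  rw [Finset.mem_range, Nat.lt_succ_iff] at hjn
  refine ⟨p + j, n - j, ?_, fun m hm => ?_⟩
  · have hj : (windowCount E p j : ℝ) ≤ γ * j := by
      simpa [windowCount] using hmin 0 (by simp)
    have hsplit := windowCount_add E p j (n - j)
    rw [Nat.add_sub_cancel' hjn] at hsplit
    have htail : (windowCount E (p + j) (n - j) : ℝ) ≤ (n - j : ℕ) := by
      exact_mod_cast windowCount_le _ _ _
    have hjn' : (j : ℝ) ≤ n := by exact_mod_cast hjn
    rw [Nat.cast_sub hjn] at htail ⊢
    rw [hsplit, Nat.cast_add] at h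
    linarith [mul_le_mul_of_nonneg_left hjn' hγ]
  · have := hmin (j + m) (by rw [Finset.mem_range]; omega)
    rw [windowCount_add] at this
    push_cast at this
    linarith

lemma Ultrafilter.eventually_forall_mem_iff_eventually_mem {ι α : Type*} (U : Ultrafilter ι)
    (S : ι → Set α) (G : Finset α) :
    ∀ᶠ i in U, ∀ z ∈ G, ((∀ᶠ j in U, z ∈ S j) ↔ z ∈ S i) := by
  refine (eventually_all_finset G).2 fun z _ => ?_
  by_cases h : ∀ᶠ j in U, z ∈ S j
  · exact h.mono fun i hi => iff_of_true h hi
  · exact (Ultrafilter.eventually_not.2 h).mono fun i hi => iff_of_false h hi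

/-- An ultrafilter limit of translates of the `E n`, each translated to the start of a good tail. -/
lemma exists_prefixes_dense_finitely_embedded (E : ℕ → Set ℤ) {γ δ : ℝ} (hγ : 0 ≤ γ)
    (hγδ : γ < δ) (hE : ∀ n : ℕ, ∃ p : ℤ, δ * n ≤ windowCount (E n) p n) :
    ∃ C : Set ℤ, (∀ m : ℕ, γ * m ≤ windowCount C 0 m) ∧
      ∀ G : Finset ℤ, ↑G ⊆ C → ∃ (n : ℕ) (r : ℤ), ∀ z ∈ G, r + z ∈ E n := by
  choose p hp using hE
  choose r M hM hrM using fun n => exists_prefixes_dense_of_window (E := E n) hγ (hp n)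
  let U := hyperfilter ℕ
  have hUM (m : ℕ) : ∀ᶠ n in U, m ≤ M n := by
    have hU : (U : Filter ℕ) ≤ atTop := Nat.cofinite_eq_atTop ▸ hyperfilter_le_cofinite
    refine hU (((tendsto_natCast_atTop_atTop.const_mul_atTop (sub_pos.2 hγδ)).eventually_ge_atTop
      (m : ℝ)).mono fun n hn => ?_)
    exact_mod_cast hn.trans (hM n)
  have hmem (n : ℕ) (z : ℤ) : z ∈ -r n +ᵥ E n ↔ r n + z ∈ E n := by
    rw [mem_vadd_set_iff_neg_vadd_mem, neg_neg, vadd_eq_add]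
  refine ⟨{z | ∀ᶠ n in U, z ∈ -r n +ᵥ E n}, fun m => ?_, fun G hG => ?_⟩
  · obtain ⟨n, hagree, hn⟩ := ((U.eventually_forall_mem_iff_eventually_mem _
      (Finset.Icc ((0 : ℤ) + 1) (0 + m))).and (hUM m)).exists
    calc γ * m ≤ windowCount (E n) (r n) m := hrM n m hn
      _ = windowCount (-r n +ᵥ E n) 0 m := by rw [windowCount_vadd, zero_sub, neg_neg]
      _ = _ := by
        rw [windowCount_congr]
        exact fun z hz => (hagree z (by simpa using hz)).symm
  · obtain ⟨n, hn⟩ := (U.eventually_forall_mem_iff_eventually_mem _ G).exists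
    exact ⟨n, r n, fun z hz => (hmem n z).1 ((hn z hz).1 (hG hz))⟩

lemma windowCount_inter_vadd_eq_card_filter (A B : Set ℤ) [DecidablePred (· ∈ A)]
    [DecidablePred (· ∈ B)] (u p : ℤ) (m : ℕ) :
    windowCount (A ∩ (u +ᵥ B)) p m =
      (((Finset.Icc (p + 1) (p + m)).filter (· ∈ A)).filter (fun x => x - u ∈ B)).card := by
  classical
  rw [windowCount_eq_card_filter, Finset.filter_filter]
  simp only [mem_inter_iff, mem_vadd_set_iff_neg_vadd_mem, vadd_eq_add, neg_add_eq_sub]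

/-- Averaging over `n` translates `u +ᵥ B`: every `x` in the window of `A` lies in about
`windowCount B q (m + n) - m` of them. -/
lemma exists_vadd_windowCount_inter_ge (A B : Set ℤ) (p q : ℤ) (m : ℕ) {n : ℕ} (hn : 0 < n) :
    ∃ u : ℤ, (windowCount A p m : ℝ) * (windowCount B q (m + n) - m) ≤
      n * windowCount (A ∩ (u +ᵥ B)) p m := by
  classical
  set W := (Finset.Icc (p + 1) (p + m)).filter (· ∈ A)
  set R := Finset.Icc (p - q - n + 1) (p - q)
  have hR : R.card = n := by simp [R, Int.card_Icc]
  have hfiber (x : ℤ) (hx : x ∈ W) :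
      windowCount B q (m + n) ≤ (R.filter (fun u => x - u ∈ B)).card + m := by
    simp only [W, Finset.mem_filter, Finset.mem_Icc] at hx
    obtain ⟨y, hy⟩ : ∃ y : ℕ, x = p + 1 + y := ⟨(x - p - 1).toNat, by omega⟩
    have hcard : (R.filter (fun u => x - u ∈ B)).card = windowCount B (q + y) n := by
      rw [windowCount_eq_card_filter]
      refine Finset.card_nbij' (fun u => x - u) (fun w => x - w) ?_ ?_ ?_ ?_ <;>
        intro w hw <;> simp_all [R] <;> omega
    have := windowCount_le_windowCount_add B q y n (m - y)
    rw [show y + n + (m - y) = m + n by omega] at this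
    omega
  have hdouble : ∑ u ∈ R, windowCount (A ∩ (u +ᵥ B)) p m =
      ∑ x ∈ W, (R.filter (fun u => x - u ∈ B)).card := by
    simp only [windowCount_inter_vadd_eq_card_filter]
    exact Finset.sum_card_bipartiteAbove_eq_sum_card_bipartiteBelow (fun u x => x - u ∈ B)
  have hsum : windowCount A p m * windowCount B q (m + n) ≤
      ∑ u ∈ R, windowCount (A ∩ (u +ᵥ B)) p m + windowCount A p m * m := by
    rw [hdouble, windowCount_eq_card_filter, ← smul_eq_mul, ← Finset.sum_const,
      ← smul_eq_mul, ← Finset.sum_const, ← Finset.sum_add_distrib]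
    exact Finset.sum_le_sum hfiber
  obtain ⟨u, -, hu⟩ := Finset.exists_le_of_sum_le (s := R) (Finset.card_pos.1 (hR ▸ hn))
    (f := fun _ => (windowCount A p m : ℝ) * (windowCount B q (m + n) - m))
    (g := fun u => (n : ℝ) * windowCount (A ∩ (u +ᵥ B)) p m) (by
      rw [Finset.sum_const, hR, nsmul_eq_mul, ← Finset.mul_sum]
      have : (windowCount A p m : ℝ) * windowCount B q (m + n) ≤
          ∑ u ∈ R, (windowCount (A ∩ (u +ᵥ B)) p m : ℝ) + windowCount A p m * m := by
        exact_mod_cast hsum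
      have hn' : (0 : ℝ) ≤ n := by positivity
      nlinarith)
  exact ⟨u, hu⟩

lemma exists_dense_window_inter_vadd {A B : Set ℤ} {a b δ : ℝ} (ha : 0 ≤ a) (hb : 0 < b)
    (hδ : δ < a * b) (hA : ∀ m : ℕ, ∃ p : ℤ, a * m ≤ windowCount A p m)
    (hB : ∀ m : ℕ, ∃ q : ℤ, b * m ≤ windowCount B q m) (m : ℕ) :
    ∃ u p : ℤ, δ * m ≤ windowCount (A ∩ (u +ᵥ B)) p m := by
  have hlarge (c : ℝ) : ∀ᶠ n : ℕ in atTop, c ≤ n :=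
    tendsto_natCast_atTop_atTop.eventually_ge_atTop c
  obtain ⟨n, hn0, hnb, hnδ⟩ := ((eventually_gt_atTop 0).and
    ((hlarge (m / b)).and (hlarge (a * m / (a * b - δ))))).exists
  rw [div_le_iff₀ hb] at hnb
  rw [div_le_iff₀ (sub_pos.2 hδ)] at hnδ
  obtain ⟨p, hp⟩ := hA m
  obtain ⟨q, hq⟩ := hB (m + n)
  obtain ⟨u, hu⟩ := exists_vadd_windowCount_inter_ge A B p q m hn0
  refine ⟨u, p, le_of_mul_le_mul_left ?_ (Nat.cast_pos.2 hn0)⟩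
  push_cast at hq
  have hm : (0 : ℝ) ≤ m := m.cast_nonneg
  have hab : 0 ≤ a * b * m * m := by positivity
  calc (n : ℝ) * (δ * m) ≤ a * m * (b * (m + n) - m) := by
        nlinarith [mul_le_mul_of_nonneg_left hnδ hm]
    _ ≤ windowCount A p m * (windowCount B q (m + n) - m) := by
        gcongr
        nlinarith
    _ ≤ _ := hu

lemma sum_windowCount_le_of_pairwiseDisjoint {ι : Type*} {F : Finset ι} {S : ι → Set ℤ}
    (hS : (F : Set ι).PairwiseDisjoint S) (p : ℤ) (m : ℕ) :
    ∑ i ∈ F, windowCount (S i) p m ≤ m := by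
  classical
  set W := Finset.Icc (p + 1) (p + m)
  simp only [windowCount_eq_card_filter]
  calc ∑ i ∈ F, (W.filter (· ∈ S i)).card = (F.biUnion fun i => W.filter (· ∈ S i)).card :=
        (Finset.card_biUnion (t := fun i => W.filter (· ∈ S i)) fun i hi j hj hij =>
          Finset.disjoint_filter.2 fun _ _ hx hx' => Set.disjoint_left.1 (hS hi hj hij) hx hx').symm
    _ ≤ W.card :=
        Finset.card_le_card (Finset.biUnion_subset.2 fun _ _ => Finset.filter_subset _ _)
    _ = m := by simp [W, Int.card_Icc]

/-- In a long window every translate of `D` is almost as dense as `D`. -/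
lemma card_mul_le_one_of_pairwiseDisjoint_vadd {D : Set ℤ} {κ : ℝ}
    (hD : ∀ m : ℕ, ∃ p : ℤ, κ * m ≤ windowCount D p m) {F : Finset ℤ}
    (hF : (F : Set ℤ).PairwiseDisjoint (· +ᵥ D)) : F.card * κ ≤ 1 := by
  set X := ∑ x ∈ F, x.natAbs
  have hbound (m : ℕ) : F.card * κ * m ≤ m + X := by
    obtain ⟨p, hp⟩ := hD m
    have htranslate (x : ℤ) : windowCount D p m ≤ windowCount (x +ᵥ D) p m + x.natAbs := by
      simpa [windowCount_vadd] using windowCount_le_add_natAbs D p (p - x) m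
    have hsum : F.card * windowCount D p m ≤ m + X := by
      rw [← smul_eq_mul, ← Finset.sum_const]
      calc _ ≤ ∑ x ∈ F, (windowCount (x +ᵥ D) p m + x.natAbs) :=
            Finset.sum_le_sum fun x _ => htranslate x
        _ ≤ m + X := by
          rw [Finset.sum_add_distrib]
          exact Nat.add_le_add_right (sum_windowCount_le_of_pairwiseDisjoint hF p m) X
    calc (F.card : ℝ) * κ * m = F.card * (κ * m) := mul_assoc _ _ _
      _ ≤ F.card * windowCount D p m := by gcongr
      _ ≤ m + X := by exact_mod_cast hsum
  by_contra! h
  obtain ⟨m, hm⟩ := exists_nat_gt (X / (F.card * κ - 1))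
  rw [div_lt_iff₀ (sub_pos.2 h)] at hm
  linarith [hbound m]

lemma exists_finset_maximal_of_card_le {α : Type*} [DecidableEq α] {P : Finset α → Prop}
    (h0 : P ∅) {N : ℕ} (hN : ∀ F, P F → F.card ≤ N) : ∃ F, P F ∧ ∀ z ∉ F, ¬P (insert z F) := by
  have hbdd : BddAbove {k | ∃ F, P F ∧ F.card = k} := ⟨N, by rintro _ ⟨F, hF, rfl⟩; exact hN F hF⟩
  obtain ⟨F, hF, hcard⟩ := Nat.sSup_mem (s := {k | ∃ F, P F ∧ F.card = k}) ⟨0, ∅, h0, rfl⟩ hbdd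
  refine ⟨F, hF, fun z hz hins => ?_⟩
  have := le_csSup hbdd ⟨insert z F, hins, rfl⟩
  rw [Finset.card_insert_of_notMem hz] at this
  omega

/-- A maximal family of disjoint translates `f +ᵥ D` exists and has at most `1 / κ` members;
by maximality every translate of `D` meets one of them. -/
lemma exists_finset_card_mul_le_one_sub_add_eq_univ {D : Set ℤ} {κ : ℝ} (hκ : 0 < κ)
    (hD : ∀ m : ℕ, ∃ p : ℤ, κ * m ≤ windowCount D p m) :
    ∃ F : Finset ℤ, F.card * κ ≤ 1 ∧ D - D + (F : Set ℤ) = univ := by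
  obtain ⟨d₀, hd₀⟩ : D.Nonempty := by
    obtain ⟨p, hp⟩ := hD 1
    refine nonempty_of_windowCount_ne_zero (a := p) (m := 1) fun h => ?_
    rw [h] at hp
    norm_num at hp
    linarith
  obtain ⟨F, hF, hmax⟩ := exists_finset_maximal_of_card_le
    (P := fun F : Finset ℤ => (F : Set ℤ).PairwiseDisjoint (· +ᵥ D)) (by simp)
    (N := ⌊1 / κ⌋₊) fun F hF => Nat.le_floor <| (le_div_iff₀ hκ).2 <|
      card_mul_le_one_of_pairwiseDisjoint_vadd hD hF
  refine ⟨F, card_mul_le_one_of_pairwiseDisjoint_vadd hD hF, eq_univ_of_forall fun z => ?_⟩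
  by_cases hz : z ∈ F
  · exact ⟨d₀ - d₀, sub_mem_sub hd₀ hd₀, z, hz, by simp⟩
  have hins := hmax z hz
  simp only [Finset.coe_insert, Set.pairwiseDisjoint_insert, hF, true_and, not_forall,
    exists_prop] at hins
  obtain ⟨f, hf, -, hzf⟩ := hins
  obtain ⟨-, ⟨d, hd, rfl⟩, d', hd', hdd'⟩ := Set.not_disjoint_iff.1 hzf
  refine ⟨d' - d, sub_mem_sub hd' hd, f, hf, ?_⟩
  simp only [vadd_eq_add] at hdd'
  beta_reduce
  omega

lemma thick_sub_add_of_sub_add_eq_univ {S T D : Set ℤ} {F : Finset ℤ}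
    (hF : D - D + (F : Set ℤ) = univ)
    (hD : ∀ G : Finset ℤ, ↑G ⊆ D → ∃ r r' : ℤ, ∀ z ∈ G, r + z ∈ S ∧ r' + z ∈ T) :
    Thick (S - T + (F : Set ℤ)) := by
  intro k
  have hmem (z : ℤ) : z ∈ D - D + (F : Set ℤ) := hF ▸ mem_univ z
  choose w hw f hf hwf using hmem
  choose d hd d' hd' hdd' using hw
  set W := Finset.Icc (1 : ℤ) k
  obtain ⟨r, r', hrr'⟩ := hD (W.image d ∪ W.image d') (by
    simp only [Finset.coe_union, Finset.coe_image, union_subset_iff]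
    exact ⟨image_subset_iff.2 fun z _ => hd z, image_subset_iff.2 fun z _ => hd' z⟩)
  refine ⟨r - r', fun z hz => ?_⟩
  set x := z - (r - r') with hxz
  have hx : x ∈ W := by simp only [W, Finset.mem_Icc, mem_Icc] at hz ⊢; omega
  have hS := (hrr' (d x) (Finset.mem_union_left _ (Finset.mem_image_of_mem d hx))).1
  have hT := (hrr' (d' x) (Finset.mem_union_right _ (Finset.mem_image_of_mem d' hx))).2
  refine ⟨_, sub_mem_sub hS hT, f x, hf x, ?_⟩
  have := hwf x
  have := hdd' x
  beta_reduce at *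
  omega

/-- Room for the strict inequalities of the density arguments: as `k` is an integer, `k * κ ≤ 1`
for some `κ` slightly below `c` still gives `k ≤ 1 / c`. -/
lemma exists_pos_lt_forall_nat_mul_le_one {c : ℝ} (hc : 0 < c) :
    ∃ κ : ℝ, 0 < κ ∧ κ < c ∧ ∀ k : ℕ, k * κ ≤ 1 → (k : ℝ) ≤ 1 / c := by
  set N := ⌊1 / c⌋₊
  have hN : 1 / ((N : ℝ) + 1) < c := by
    rw [div_lt_iff₀ (by positivity), ← div_lt_iff₀' hc]
    exact Nat.lt_floor_add_one _
  obtain ⟨κ, hκN, hκc⟩ := exists_between hN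
  have hκ : 0 < κ := lt_trans (by positivity) hκN
  refine ⟨κ, hκ, hκc, fun k hk => ?_⟩
  have hkN : k ≤ N := by
    by_contra! hNk
    have : ((N : ℝ) + 1) * κ ≤ k * κ := by gcongr; exact_mod_cast hNk
    rw [div_lt_iff₀ (by positivity)] at hκN
    linarith
  exact (Nat.cast_le.2 hkN).trans (Nat.floor_le (by positivity))

theorem jin_with_bound (A B : Set ℤ) (α β : ℝ) (hA : BD A = α) (hB : BD B = β)
    (hα : 0 < α) (hβ : 0 < β) :
    ∃ F : Finset ℤ, (F.card : ℝ) ≤ 1 / (α * β) ∧ Thick ((A - B) + (F : Set ℤ)) := by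
  subst hA hB
  obtain ⟨κ, hκ, hκαβ, hcard⟩ := exists_pos_lt_forall_nat_mul_le_one (mul_pos hα hβ)
  obtain ⟨δ, hκδ, hδ⟩ := exists_between hκαβ
  choose u p hup using exists_dense_window_inter_vadd hα.le hβ hδ
    (exists_windowCount_ge_BD_mul A) (exists_windowCount_ge_BD_mul B)
  obtain ⟨D, hD, hDA⟩ := exists_prefixes_dense_finitely_embedded (fun n => A ∩ (u n +ᵥ B))
    hκ.le hκδ fun n => ⟨p n, hup n⟩
  obtain ⟨F, hFκ, hF⟩ := exists_finset_card_mul_le_one_sub_add_eq_univ hκ fun m => ⟨0, hD m⟩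
  refine ⟨F, hcard _ hFκ, thick_sub_add_of_sub_add_eq_univ hF fun G hG => ?_⟩
  obtain ⟨n, r, hr⟩ := hDA G hG
  refine ⟨r, -u n + r, fun z hz => ⟨(hr z hz).1, ?_⟩⟩
  rw [add_assoc, ← vadd_eq_add, ← mem_vadd_set_iff_neg_vadd_mem]
  exact (hr z hz).2
end

section
/- If A, B ⊆ ℕ have positive upper Banach density, then the sumset A + B is piecewise syndetic (Jin's theorem). -/
open Filter Set Pointwise

def ThickN (A : Set ℕ) : Prop :=
  ∀ k : ℕ, ∃ y : ℕ, Set.Icc (y + 1) (y + k) ⊆ A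

def PiecewiseSyndeticN (A : Set ℕ) : Prop :=
  ∃ F : Finset ℕ, ThickN (A + (F : Set ℕ))


/-! If `BDN A + BDN E > 1` then `A + E` is thick: take windows of length `n` in which `A` and `E`
have at least their density proportion of points; for `m` just beyond the sum of the two windows,
the points of `A` and the reflections `m - e` of the points of `E` are too many to be disjoint in
an interval of length about `n`.

So it suffices to find a finite `F` with `BDN (B + F) > 1 - BDN A`, by a density increment. If
`E` has density `δ < 1`, pick `l` such that every window of length `l` holds about at most `δ l`
points of `E`. In a window where `E` has density `δ`, each point of `E` is followed by about
`(1 - δ) l` non-points within distance `l`, so some shift `0 < g ≤ l` carries a proportion about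
`δ (1 - δ)` of the window from `E` onto non-points, and `E + {0, g}` has density about
`δ + δ (1 - δ)`. Repeating pushes the density of `B + F` beyond any `τ < 1`. -/

open scoped Classical Finset Topology

noncomputable def window (S : Set ℕ) (x n : ℕ) : Finset ℕ :=
  {m ∈ Finset.Ioc x (x + n) | m ∈ S}

section Window

variable {S : Set ℕ} {x n : ℕ}

@[simp]
lemma mem_window {m : ℕ} : m ∈ window S x n ↔ (x < m ∧ m ≤ x + n) ∧ m ∈ S := by
  simp [window]

lemma card_window_le : #(window S x n) ≤ n :=
  (Finset.card_filter_le _ _).trans (by simp)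

lemma card_window_add {m : ℕ} :
    #(window S x (m + n)) = #(window S x m) + #(window S (x + m) n) := by
  simp only [window, Finset.card_filter]
  rw [← add_assoc, Finset.sum_Ioc_consecutive] <;> omega

lemma card_window_eq_card_filter_Ioc :
    #(window S x n) = #{g ∈ Finset.Ioc 0 n | x + g ∈ S} := by
  have : Finset.Ioc x (x + n) = (Finset.Ioc 0 n).map (addLeftEmbedding x) := by simp
  rw [window, this, Finset.filter_map, Finset.card_map]
  rfl

end Window

section MaxCount

variable (S : Set ℕ) (n : ℕ)

lemma ncard_inter_Icc_eq_card_window (x : ℕ) :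
    (S ∩ Set.Icc (x + 1) (x + n)).ncard = #(window S x n) := by
  rw [← Set.ncard_coe_finset]
  congr 1
  ext m
  simp [and_comm]

lemma maxCountN_eq_sSup_range :
    maxCountN S n = sSup (Set.range fun x => #(window S x n)) := by
  simp only [maxCountN, ncard_inter_Icc_eq_card_window]
  congr 1
  ext c
  simp [eq_comm]

lemma bddAbove_range_card_window : BddAbove (Set.range fun x => #(window S x n)) :=
  ⟨n, Set.forall_mem_range.2 fun _ => card_window_le⟩

lemma card_window_le_maxCountN (x : ℕ) : #(window S x n) ≤ maxCountN S n := by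
  rw [maxCountN_eq_sSup_range]
  exact le_csSup (bddAbove_range_card_window S n) ⟨x, rfl⟩

lemma exists_card_window_eq_maxCountN :
    ∃ x, #(window S x n) = maxCountN S n := by
  rw [maxCountN_eq_sSup_range]
  exact Nat.sSup_mem (Set.range_nonempty _) (bddAbove_range_card_window S n)

lemma maxCountN_le : maxCountN S n ≤ n := by
  obtain ⟨x, hx⟩ := exists_card_window_eq_maxCountN S n
  exact hx ▸ card_window_le

lemma maxCountN_add_le_s18 (m : ℕ) :
    maxCountN S (m + n) ≤ maxCountN S m + maxCountN S n := by
  obtain ⟨x, hx⟩ := exists_card_window_eq_maxCountN S (m + n)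
  rw [← hx, card_window_add]
  exact add_le_add (card_window_le_maxCountN S m x) (card_window_le_maxCountN S n (x + m))

end MaxCount

section Density

variable {S : Set ℕ} {n : ℕ}

lemma BDN_le_maxCountN_div (hn : 0 < n) : BDN S ≤ maxCountN S n / n :=
  ciInf_le ⟨0, Set.forall_mem_range.2 fun _ => by positivity⟩ (⟨n, hn⟩ : ℕ+)

variable (S) in
lemma exists_BDN_mul_le_card_window (hn : 0 < n) :
    ∃ x, BDN S * n ≤ #(window S x n) := by
  obtain ⟨x, hx⟩ := exists_card_window_eq_maxCountN S n
  refine ⟨x, ?_⟩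
  rw [hx, ← le_div_iff₀ (by positivity)]
  exact BDN_le_maxCountN_div hn

variable (S) in
/-- Fekete's lemma identifies `BDN` with the limit in the usual definition of Banach density. -/
lemma tendsto_maxCountN_div_atTop :
    Tendsto (fun n : ℕ => (maxCountN S n : ℝ) / n) atTop (𝓝 (BDN S)) := by
  have hsub : Subadditive fun n => (maxCountN S n : ℝ) := fun m n => by
    dsimp only
    exact_mod_cast maxCountN_add_le_s18 S n m
  have hbdd : BddBelow (Set.range fun n => (maxCountN S n : ℝ) / n) :=
    ⟨0, Set.forall_mem_range.2 fun _ => by positivity⟩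
  have hlim := hsub.tendsto_lim hbdd
  convert hlim using 2
  refine le_antisymm ?_ (le_ciInf fun n => hsub.lim_le_div hbdd n.ne_zero)
  exact ge_of_tendsto hlim ((eventually_gt_atTop 0).mono fun n hn => BDN_le_maxCountN_div hn)

lemma le_BDN_of_frequently {ρ : ℝ} (h : ∃ᶠ n in atTop, ∃ x, ρ * n ≤ #(window S x n)) :
    ρ ≤ BDN S := by
  refine ge_of_tendsto_of_frequently (tendsto_maxCountN_div_atTop S) ?_
  refine (h.and_eventually (eventually_gt_atTop 0)).mono fun n ⟨⟨x, hx⟩, hn⟩ => ?_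
  rw [le_div_iff₀ (by positivity)]
  exact hx.trans (by exact_mod_cast card_window_le_maxCountN S n x)

end Density

lemma eventually_mul_add_le_mul {ρ θ : ℝ} (h : ρ < θ) (c : ℝ) :
    ∀ᶠ n : ℕ in atTop, ρ * (n + c) ≤ θ * n := by
  filter_upwards [(tendsto_natCast_atTop_atTop.const_mul_atTop (sub_pos.2 h)).eventually_ge_atTop
    (ρ * c)] with n hn
  linarith

lemma exists_add_eq_of_card_lt {P Q I : Finset ℕ} {m : ℕ} (hP : P ⊆ I)
    (hQ : ∀ q ∈ Q, q ≤ m ∧ m - q ∈ I) (hcard : #I < #P + #Q) :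
    ∃ p ∈ P, ∃ q ∈ Q, p + q = m := by
  have hinj : Set.InjOn (m - ·) Q := fun q hq q' hq' h => by
    have := (hQ q hq).1
    have := (hQ q' hq').1
    simp only at h
    omega
  have hQI : Q.image (m - ·) ⊆ I := Finset.image_subset_iff.2 fun q hq => (hQ q hq).2
  obtain ⟨p, hp⟩ := Finset.inter_nonempty_of_card_lt_card_add_card hP hQI
    (by rwa [Finset.card_image_of_injOn hinj])
  obtain ⟨hpP, q, hq, rfl⟩ := by simpa using hp
  exact ⟨_, hpP, q, hq, by have := (hQ q hq).1; omega⟩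

lemma thickN_add_of_one_lt_BDN_add {A E : Set ℕ} (h : 1 < BDN A + BDN E) : ThickN (A + E) := by
  intro k
  obtain ⟨n, hnk, hn⟩ :=
    ((eventually_mul_add_le_mul h k).and (eventually_gt_atTop 0)).exists
  obtain ⟨x, hx⟩ := exists_BDN_mul_le_card_window A hn
  obtain ⟨y, hy⟩ := exists_BDN_mul_le_card_window E hn
  refine ⟨x + y + n, fun m hm => ?_⟩
  obtain ⟨hm₁, hm₂⟩ := hm
  have hcard : m - y - x - 1 < #(window A x n) + #(window E y n) := by
    have : ((m - y - x - 1 : ℕ) : ℝ) + 1 ≤ n + k := by exact_mod_cast (by omega)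
    have : ((m - y - x - 1 : ℕ) : ℝ) < #(window A x n) + #(window E y n) := by linarith
    exact_mod_cast this
  have hA : window A x n ⊆ Finset.Ioo x (m - y) := fun p hp => by
    simp only [mem_window, Finset.mem_Ioo] at hp ⊢
    omega
  have hE : ∀ q ∈ window E y n, q ≤ m ∧ m - q ∈ Finset.Ioo x (m - y) := fun q hq => by
    simp only [mem_window, Finset.mem_Ioo] at hq ⊢
    omega
  obtain ⟨p, hp, q, hq, rfl⟩ := exists_add_eq_of_card_lt hA hE (by rwa [Nat.card_Ioo])
  exact Set.add_mem_add (mem_window.1 hp).2 (mem_window.1 hq).2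

lemma card_window_add_card_filter_le (E : Set ℕ) (x n : ℕ) {g l : ℕ} (hgl : g ≤ l) :
    #(window E x n) + #{e ∈ window E x n | e + g ∉ E} ≤ #(window (E + {0, g}) x (n + l)) := by
  set W := window E x n
  have hdisj : Disjoint W ({e ∈ W | e + g ∉ E}.image (· + g)) := by
    refine Finset.disjoint_left.2 fun m hmW hm => ?_
    obtain ⟨e, he, rfl⟩ := Finset.mem_image.1 hm
    exact (Finset.mem_filter.1 he).2 (mem_window.1 hmW).2
  rw [← Finset.card_image_of_injective {e ∈ W | e + g ∉ E} (add_left_injective g),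
    ← Finset.card_union_of_disjoint hdisj]
  refine Finset.card_le_card fun m hm => ?_
  rcases Finset.mem_union.1 hm with hm | hm
  · obtain ⟨hmx, hmE⟩ := mem_window.1 hm
    exact mem_window.2 ⟨by omega, m, hmE, 0, by simp, rfl⟩
  · obtain ⟨e, he, rfl⟩ := Finset.mem_image.1 hm
    obtain ⟨hex, heE⟩ := mem_window.1 (Finset.mem_filter.1 he).1
    exact mem_window.2 ⟨by omega, e, heE, g, by simp, rfl⟩

/-- Double counting the pairs `(e, g)` with `e ∈ W`, `0 < g ≤ l` and `e + g ∉ E`: each `e`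
contributes at least `l - maxCountN E l` such `g`. -/
lemma exists_card_mul_le_mul_card_filter (E : Set ℕ) (W : Finset ℕ) {l : ℕ} (hl : 0 < l) :
    ∃ g ∈ Finset.Ioc 0 l, #W * (l - maxCountN E l) ≤ l * #{e ∈ W | e + g ∉ E} := by
  have hgaps (e : ℕ) : l - maxCountN E l ≤ #{g ∈ Finset.Ioc 0 l | e + g ∉ E} := by
    have hsplit :=
      Finset.card_filter_add_card_filter_not (s := Finset.Ioc 0 l) (fun g => e + g ∈ E)
    rw [← card_window_eq_card_filter_Ioc, Nat.card_Ioc] at hsplit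
    have := card_window_le_maxCountN E l e
    omega
  refine Finset.exists_le_of_sum_le (by simpa using hl) ?_
  calc ∑ _g ∈ Finset.Ioc 0 l, #W * (l - maxCountN E l)
      = l * ∑ _e ∈ W, (l - maxCountN E l) := by simp
    _ ≤ l * ∑ e ∈ W, #{g ∈ Finset.Ioc 0 l | e + g ∉ E} := by gcongr with e; exact hgaps e
    _ = ∑ g ∈ Finset.Ioc 0 l, l * #{e ∈ W | e + g ∉ E} := by
      rw [← Finset.mul_sum]
      exact congrArg (l * ·)
        (Finset.sum_card_bipartiteAbove_eq_sum_card_bipartiteBelow (fun e g => e + g ∉ E))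

lemma exists_card_window_mul_le (E : Set ℕ) (x n : ℕ) {l : ℕ} (hl : 0 < l) :
    ∃ g ≤ l,
      #(window E x n) * (2 * l - maxCountN E l) ≤ l * #(window (E + {0, g}) x (n + l)) := by
  obtain ⟨g, hg, hgain⟩ := exists_card_mul_le_mul_card_filter E (window E x n) hl
  have hgl : g ≤ l := (Finset.mem_Ioc.1 hg).2
  refine ⟨g, hgl, ?_⟩
  have hM := maxCountN_le E l
  calc #(window E x n) * (2 * l - maxCountN E l)
      = l * #(window E x n) + #(window E x n) * (l - maxCountN E l) := by
        rw [show 2 * l - maxCountN E l = l + (l - maxCountN E l) by omega]; ring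
    _ ≤ l * (#(window E x n) + #{e ∈ window E x n | e + g ∉ E}) := by rw [mul_add]; gcongr
    _ ≤ l * #(window (E + {0, g}) x (n + l)) :=
        Nat.mul_le_mul_left l (card_window_add_card_filter_le E x n hgl)

lemma exists_le_BDN_add_pair_of_mul_lt {E : Set ℕ} {l : ℕ} (hl : 0 < l) {ρ : ℝ}
    (hρ : ρ * l < BDN E * (2 * l - maxCountN E l)) : ∃ g, ρ ≤ BDN (E + {0, g}) := by
  have hM : (maxCountN E l : ℝ) ≤ l := by exact_mod_cast maxCountN_le E l
  have hev : ∀ᶠ n : ℕ in atTop, ∃ g ∈ Finset.range (l + 1), ∃ x,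
      ρ * ↑(n + l) ≤ #(window (E + {0, g}) x (n + l)) := by
    filter_upwards [eventually_mul_add_le_mul hρ l, eventually_gt_atTop 0] with n hn hn0
    obtain ⟨x, hx⟩ := exists_BDN_mul_le_card_window E hn0
    obtain ⟨g, hgl, hg⟩ := exists_card_window_mul_le E x n hl
    refine ⟨g, Finset.mem_range_succ_iff.2 hgl, x, ?_⟩
    have hg' : (#(window E x n) : ℝ) * (2 * l - maxCountN E l)
        ≤ l * #(window (E + {0, g}) x (n + l)) := by
      have := Nat.cast_le (α := ℝ) |>.2 hg
      push_cast [Nat.cast_sub (by linarith [maxCountN_le E l] : maxCountN E l ≤ 2 * l)] at this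
      exact this
    have : l * (ρ * ↑(n + l)) ≤ l * #(window (E + {0, g}) x (n + l)) := calc
      l * (ρ * ↑(n + l)) = ρ * l * (n + l) := by push_cast; ring
      _ ≤ BDN E * (2 * l - maxCountN E l) * n := hn
      _ = BDN E * n * (2 * l - maxCountN E l) := by ring
      _ ≤ #(window E x n) * (2 * l - maxCountN E l) := by gcongr; linarith
      _ ≤ _ := hg'
    exact le_of_mul_le_mul_left this (by positivity)
  obtain ⟨g, -, hg⟩ := (frequently_exists_finset _).1 hev.frequently
  exact ⟨g, le_BDN_of_frequently ((tendsto_add_atTop_nat l).frequently hg)⟩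

lemma exists_le_BDN_add_pair {E : Set ℕ} {ρ : ℝ} (hρ : ρ < BDN E * (2 - BDN E)) :
    ∃ g, ρ ≤ BDN (E + {0, g}) := by
  have hlim : Tendsto (fun l : ℕ => BDN E * (2 - maxCountN E l / l)) atTop
      (𝓝 (BDN E * (2 - BDN E))) :=
    ((tendsto_maxCountN_div_atTop E).const_sub 2).const_mul _
  obtain ⟨l, hl, hl0⟩ := ((hlim.eventually_const_lt hρ).and (eventually_gt_atTop 0)).exists
  refine exists_le_BDN_add_pair_of_mul_lt hl0 ?_
  have hlR : (0 : ℝ) < l := by positivity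
  calc ρ * l < BDN E * (2 - maxCountN E l / l) * l := mul_lt_mul_of_pos_right hl hlR
    _ = BDN E * (2 * l - maxCountN E l) := by field_simp

/-- If all `BDN (B + F)` stayed below `τ`, a set `B + F` of density `δ` close to their supremum
would give, through `exists_le_BDN_add_pair`, a set `B + F + {0, g}` of density about
`δ + δ (1 - δ) ≥ δ + β (1 - τ)`, beyond the supremum. -/
lemma exists_finset_le_BDN_add {B : Set ℕ} (hB : 0 < BDN B) {τ : ℝ} (hτ : τ < 1) :
    ∃ F : Finset ℕ, τ ≤ BDN (B + F) := by
  by_contra! h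
  set β := BDN B
  set c := β * (1 - τ) / 4
  have hbdd : BddAbove (Set.range fun F : Finset ℕ => BDN (B + F)) :=
    ⟨τ, Set.forall_mem_range.2 fun F => (h F).le⟩
  set σ := ⨆ F : Finset ℕ, BDN (B + F)
  have hβσ : β ≤ σ := by simpa using le_ciSup hbdd {0}
  have hστ : σ ≤ τ := ciSup_le fun F => (h F).le
  have hc : 0 < c := by positivity
  obtain ⟨F, hF⟩ := exists_lt_of_lt_ciSup (show σ - c < σ by linarith)
  set δ := BDN (B + F)
  have hcβ : c ≤ β / 4 := by
    have : 0 ≤ β * τ := by nlinarith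
    simp only [c]
    linarith
  have hδ : 3 * β / 4 < δ := by linarith
  have hgap : (3 * β / 4) * (1 - τ) < δ * (1 - δ) :=
    mul_lt_mul'' hδ (by linarith [h F]) (by positivity) (by linarith)
  obtain ⟨g, hg⟩ := exists_le_BDN_add_pair (E := B + F) (ρ := δ + c) (by
    have : 3 * c < δ * (1 - δ) := by simp only [c]; linarith
    linarith [show δ * (2 - δ) = δ + δ * (1 - δ) by ring])
  have hle : BDN (B + ↑(F + {0, g})) ≤ σ := le_ciSup hbdd _
  rw [Finset.coe_add, ← add_assoc, Finset.coe_pair] at hle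
  linarith

theorem jin (A B : Set ℕ) (hA : 0 < BDN A) (hB : 0 < BDN B) :
    PiecewiseSyndeticN (A + B) := by
  obtain ⟨F, hF⟩ := exists_finset_le_BDN_add hB (τ := 1 - BDN A / 2) (by linarith)
  refine ⟨F, ?_⟩
  rw [add_assoc]
  exact thickN_add_of_one_lt_BDN_add (by linarith)
end
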